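/- Define the viable feedback correspondence B^viab(t,x) = argmax_{u ∈ B(t,x)} E_μ[1_{A(t)}(x) V(t+1, f(t,x,u,ω))], which is nonempty since B(t,x) is finite and nonempty. Then any feedback u* with u*(t,x) ∈ B^viab(t,x) for all (t,x) achieves the maximal viability probability: for every (t₀,x₀), P(closed-loop trajectory from x₀ under u* stays in A(s) for s = t₀,...,T) = V(t₀,x₀). In particular, if x₀ ∈ Viab_β(t₀) then u* is a β-viable feedback. -/

import Mathlib

/-!
Under a fixed feedback `u`, the viability probability obeys the closed-loop recursion
`P t x = 1_{A t}(x) * ∑ w, μ w * P (t + 1) (f t x (u t x) w)`: integrate out the noise at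
time `t`, which the rest of the trajectory never reads. For an argmax feedback the Bellman
equation defining `V` becomes this same recursion, and `P T = V T = 1_{A T}`, so backward
induction gives `P = V`.
-/

open Finset Filter
open scoped Classical BigOperators

/-- State after evolving `k` steps from `x` at time `t` under feedback `u` and scenario `ω`. -/
def traj {X U W : Type*} (f : ℕ → X → U → W → X) (u : ℕ → X → U) (ω : ℕ → W) :
    ℕ → X → ℕ → X
  | _, x, 0 => x
  | t, x, k + 1 => traj f u ω (t + 1) (f t x (u t x) (ω t)) k

/-- Probability, under the product law of the i.i.d. noise with marginal `μ`, that the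
closed-loop trajectory starting from `x0` at time `t0` under feedback `u` satisfies the
state constraints `A s` for all `s = t0, …, T`. -/
noncomputable def viabProb {X U W : Type*} [Fintype W] [Inhabited W]
    (f : ℕ → X → U → W → X) (A : ℕ → Set X) (μ : W → ℝ) (T : ℕ)
    (u : ℕ → X → U) (t0 : ℕ) (x0 : X) : ℝ :=
  ∑ ω : Fin T → W, (∏ i, μ (ω i)) *
    (if ∀ s ∈ Finset.Icc t0 T,
        traj f u (fun n => if h : n < T then ω ⟨n, h⟩ else default) t0 x0 (s - t0) ∈ A s
      then (1 : ℝ) else 0)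


section ProductWeights

variable {ι W R : Type*} [Fintype ι] [DecidableEq ι] [CommSemiring R]

theorem sum_prod_weights [Fintype W] (μ : W → R) (hμ : ∑ w, μ w = 1) :
    ∑ ω : ι → W, ∏ i, μ (ω i) = 1 := by
  rw [← Fintype.prod_sum]
  simp [hμ]

theorem mul_prod_weights_eq_mul_prod_update (μ : W → R) (ω : ι → W) (j : ι) (w : W) :
    μ w * ∏ i, μ (ω i) = μ (ω j) * ∏ i, μ (Function.update ω j w i) := by
  simp only [← Function.comp_apply (f := μ), Function.comp_update,
    Finset.prod_update_of_mem (Finset.mem_univ j)]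
  rw [Finset.prod_eq_mul_prod_sdiff_singleton_of_mem (Finset.mem_univ j)]
  simp only [Function.comp_apply]
  ring

/-- `(w, ω) ↦ (ω j, update ω j w)` is an involution of `W × (ι → W)` preserving the weight
`μ w * ∏ i, μ (ω i)`. -/
theorem sum_prod_weights_mul_eq_sum_update [Fintype W] (μ : W → R) (hμ : ∑ w, μ w = 1) (j : ι)
    (g : (ι → W) → R) :
    ∑ ω : ι → W, (∏ i, μ (ω i)) * g ω =
      ∑ w, μ w * ∑ ω : ι → W, (∏ i, μ (ω i)) * g (Function.update ω j w) := by
  have swap : Function.Involutive fun p : W × (ι → W) => (p.2 j, Function.update p.2 j p.1) := by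
    rintro ⟨w, ω⟩
    simp
  calc ∑ ω : ι → W, (∏ i, μ (ω i)) * g ω
      = ∑ p : W × (ι → W), μ p.1 * ((∏ i, μ (p.2 i)) * g p.2) := by
        simp only [Fintype.sum_prod_type, ← Finset.mul_sum, ← Finset.sum_mul, hμ, one_mul]
    _ = ∑ p : W × (ι → W),
          μ (p.2 j) * ((∏ i, μ (Function.update p.2 j p.1 i)) * g (Function.update p.2 j p.1)) :=
        (Fintype.sum_equiv swap.toPerm _ _ fun _ => rfl).symm
    _ = _ := by
        simp only [Fintype.sum_prod_type, Finset.mul_sum, ← mul_assoc]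
        refine Finset.sum_congr rfl fun w _ => Finset.sum_congr rfl fun ω _ => ?_
        rw [mul_prod_weights_eq_mul_prod_update μ ω j w]

end ProductWeights

section Trajectory

variable {X U W : Type*} (f : ℕ → X → U → W → X) (u : ℕ → X → U)

theorem traj_congr {ω ω' : ℕ → W} {t : ℕ} (h : ∀ n, t ≤ n → ω n = ω' n) (x : X) (k : ℕ) :
    traj f u ω t x k = traj f u ω' t x k := by
  induction k generalizing t x with
  | zero => rfl
  | succ k ih =>
    rw [traj, traj, h t le_rfl]
    exact ih (fun n hn => h n (by omega)) _

def TrajViable (A : ℕ → Set X) (T : ℕ) (ω : ℕ → W) (t : ℕ) (x : X) : Prop :=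
  ∀ s ∈ Finset.Icc t T, traj f u ω t x (s - t) ∈ A s

variable {f u} {A : ℕ → Set X} {T : ℕ}

theorem trajViable_self {ω : ℕ → W} {x : X} : TrajViable f u A T ω T x ↔ x ∈ A T := by
  simp [TrajViable, traj]

theorem trajViable_iff_of_lt {ω : ℕ → W} {t : ℕ} (ht : t < T) {x : X} :
    TrajViable f u A T ω t x ↔ x ∈ A t ∧ TrajViable f u A T ω (t + 1) (f t x (u t x) (ω t)) := by
  have hsub : ∀ s, t + 1 ≤ s → s - t = s - (t + 1) + 1 := by omega
  constructor
  · intro h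
    refine ⟨by simpa [traj] using h t (Finset.mem_Icc.2 ⟨le_rfl, ht.le⟩), fun s hs => ?_⟩
    obtain ⟨hts, hsT⟩ := Finset.mem_Icc.1 hs
    have := h s (Finset.mem_Icc.2 ⟨by omega, hsT⟩)
    rwa [hsub s hts, traj] at this
  · rintro ⟨hx, h⟩ s hs
    obtain ⟨hts, hsT⟩ := Finset.mem_Icc.1 hs
    obtain rfl | hts := hts.eq_or_lt
    · simpa [traj] using hx
    · rw [hsub s hts, traj]
      exact h s (Finset.mem_Icc.2 ⟨hts, hsT⟩)

theorem trajViable_congr {ω ω' : ℕ → W} {t : ℕ} (h : ∀ n, t ≤ n → ω n = ω' n) {x : X} :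
    TrajViable f u A T ω t x ↔ TrajViable f u A T ω' t x := by
  simp only [TrajViable, traj_congr f u h]

end Trajectory

section ViabilityProbability

variable {X U W : Type*} [Inhabited W]

def extendNoise (T : ℕ) (ω : Fin T → W) : ℕ → W := fun n => if h : n < T then ω ⟨n, h⟩ else default

theorem extendNoise_update_of_ne {T : ℕ} (ω : Fin T → W) (j : Fin T) (w : W) {n : ℕ}
    (hn : n ≠ j) : extendNoise T (Function.update ω j w) n = extendNoise T ω n := by
  unfold extendNoise
  split_ifs with h
  · exact Function.update_of_ne (fun hj => hn (congrArg Fin.val hj)) _ _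
  · rfl

variable [Fintype W] {f : ℕ → X → U → W → X} {A : ℕ → Set X} {μ : W → ℝ} {T : ℕ}
  {u : ℕ → X → U}

theorem viabProb_eq_sum (t : ℕ) (x : X) :
    viabProb f A μ T u t x =
      ∑ ω : Fin T → W, (∏ i, μ (ω i)) *
        if TrajViable f u A T (extendNoise T ω) t x then (1 : ℝ) else 0 := by
  unfold viabProb TrajViable extendNoise
  congr!

theorem viabProb_self (hμ : ∑ w, μ w = 1) (x : X) :
    viabProb f A μ T u T x = if x ∈ A T then 1 else 0 := by
  simp only [viabProb_eq_sum, trajViable_self, ← Finset.sum_mul, sum_prod_weights μ hμ, one_mul]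

theorem viabProb_of_lt (hμ : ∑ w, μ w = 1) {t : ℕ} (ht : t < T) (x : X) :
    viabProb f A μ T u t x =
      (if x ∈ A t then 1 else 0) * ∑ w, μ w * viabProb f A μ T u (t + 1) (f t x (u t x) w) := by
  have hsplit : ∀ (ω : Fin T → W) (w : W),
      TrajViable f u A T (extendNoise T (Function.update ω ⟨t, ht⟩ w)) t x ↔
        x ∈ A t ∧ TrajViable f u A T (extendNoise T ω) (t + 1) (f t x (u t x) w) := by
    intro ω w
    have hw : extendNoise T (Function.update ω ⟨t, ht⟩ w) t = w := by
      simp [extendNoise, ht]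
    rw [trajViable_iff_of_lt ht, hw,
      trajViable_congr fun n hn => extendNoise_update_of_ne ω ⟨t, ht⟩ w (ne_of_gt hn)]
  rw [viabProb_eq_sum, sum_prod_weights_mul_eq_sum_update μ hμ ⟨t, ht⟩, Finset.mul_sum]
  refine Finset.sum_congr rfl fun w _ => ?_
  simp only [hsplit, ite_and, viabProb_eq_sum, Finset.mul_sum]
  refine Finset.sum_congr rfl fun ω _ => ?_
  split_ifs <;> ring

theorem viabProb_eq_of_recursion (hμ : ∑ w, μ w = 1) (v : ℕ → X → ℝ)
    (hvT : ∀ x, v T x = if x ∈ A T then 1 else 0)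
    (hv : ∀ t < T, ∀ x,
      v t x = (if x ∈ A t then 1 else 0) * ∑ w, μ w * v (t + 1) (f t x (u t x) w))
    {t : ℕ} (ht : t ≤ T) (x : X) :
    viabProb f A μ T u t x = v t x := by
  induction ht using Nat.decreasingInduction generalizing x with
  | self => rw [viabProb_self hμ, hvT]
  | of_succ t ht ih => simp only [viabProb_of_lt hμ ht, hv t ht, ih]

end ViabilityProbability

theorem viable_feedback_achieves_value_general
    {X U W : Type*} [Fintype W] [Inhabited W]
    (f : ℕ → X → U → W → X) (B : ℕ → X → Finset U) (A : ℕ → Set X)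
    (μ : W → ℝ) (hmu1 : ∑ w, μ w = 1) (T : ℕ)
    (hB : ∀ t x, (B t x).Nonempty)
    (V : ℕ → X → ℝ)
    (hVT : ∀ x, V T x = if x ∈ A T then (1 : ℝ) else 0)
    (hV : ∀ t, t < T → ∀ x,
      V t x = (B t x).sup' (hB t x)
        (fun u => (if x ∈ A t then (1 : ℝ) else 0) * ∑ w, μ w * V (t + 1) (f t x u w)))
    (ustar : ℕ → X → U)
    (hstar : ∀ t, t < T → ∀ x, ustar t x ∈ B t x ∧
      ∀ v ∈ B t x,
        (if x ∈ A t then (1 : ℝ) else 0) * ∑ w, μ w * V (t + 1) (f t x v w) ≤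
          (if x ∈ A t then (1 : ℝ) else 0) * ∑ w, μ w * V (t + 1) (f t x (ustar t x) w)) :
    (∀ t, t < T → ∀ x, ∃ u ∈ B t x, ∀ v ∈ B t x,
        (if x ∈ A t then (1 : ℝ) else 0) * ∑ w, μ w * V (t + 1) (f t x v w) ≤
          (if x ∈ A t then (1 : ℝ) else 0) * ∑ w, μ w * V (t + 1) (f t x u w)) ∧
    (∀ t0 ≤ T, ∀ x0, viabProb f A μ T ustar t0 x0 = V t0 x0) ∧
    (∀ β : ℝ, ∀ t0 ≤ T, ∀ x0, β ≤ V t0 x0 → β ≤ viabProb f A μ T ustar t0 x0) := by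
  have hbellman : ∀ t < T, ∀ x, V t x =
      (if x ∈ A t then 1 else 0) * ∑ w, μ w * V (t + 1) (f t x (ustar t x) w) := by
    intro t ht x
    rw [hV t ht x]
    exact le_antisymm (Finset.sup'_le _ _ (hstar t ht x).2)
      (Finset.le_sup'_of_le _ (hstar t ht x).1 le_rfl)
  have hvalue : ∀ t0 ≤ T, ∀ x0, viabProb f A μ T ustar t0 x0 = V t0 x0 :=
    fun t0 ht0 x0 => viabProb_eq_of_recursion hmu1 V hVT hbellman ht0 x0
  exact ⟨fun t ht x => ⟨ustar t x, hstar t ht x⟩, hvalue,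
    fun β t0 ht0 x0 hβ => (hvalue t0 ht0 x0).symm ▸ hβ⟩

theorem viable_feedback_achieves_value
    {X U W : Type*} [Fintype W] [Inhabited W]
    (f : ℕ → X → U → W → X) (B : ℕ → X → Finset U) (A : ℕ → Set X)
    (μ : W → ℝ) (hmu0 : ∀ w, 0 ≤ μ w) (hmu1 : ∑ w, μ w = 1) (T : ℕ)
    (hB : ∀ t x, (B t x).Nonempty)
    (V : ℕ → X → ℝ)
    (hVT : ∀ x, V T x = if x ∈ A T then (1 : ℝ) else 0)
    (hV : ∀ t, t < T → ∀ x,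
      V t x = (B t x).sup' (hB t x)
        (fun u => (if x ∈ A t then (1 : ℝ) else 0) * ∑ w, μ w * V (t + 1) (f t x u w)))
    (ustar : ℕ → X → U)
    (hstar : ∀ t, t < T → ∀ x, ustar t x ∈ B t x ∧
      ∀ v ∈ B t x,
        (if x ∈ A t then (1 : ℝ) else 0) * ∑ w, μ w * V (t + 1) (f t x v w) ≤
          (if x ∈ A t then (1 : ℝ) else 0) * ∑ w, μ w * V (t + 1) (f t x (ustar t x) w)) :
    (∀ t, t < T → ∀ x, ∃ u ∈ B t x, ∀ v ∈ B t x,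
        (if x ∈ A t then (1 : ℝ) else 0) * ∑ w, μ w * V (t + 1) (f t x v w) ≤
          (if x ∈ A t then (1 : ℝ) else 0) * ∑ w, μ w * V (t + 1) (f t x u w)) ∧
    (∀ t0 ≤ T, ∀ x0, viabProb f A μ T ustar t0 x0 = V t0 x0) ∧
    (∀ β : ℝ, ∀ t0 ≤ T, ∀ x0, β ≤ V t0 x0 → β ≤ viabProb f A μ T ustar t0 x0) :=
  viable_feedback_achieves_value_general f B A μ hmu1 T hB V hVT hV ustar hstar
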